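/- Let Xᵗ⁺¹ = [U, U⊥][[B̂, D̂₂ᵀ],[D̂₁, D̂₁ B̂⁻¹ D̂₂ᵀ]][V, V⊥]ᵀ and X̄ = [U, U⊥][[B̃, D̃₂ᵀ],[D̃₁, D̃₁ B̃⁻¹ D̃₂ᵀ]][V, V⊥]ᵀ with B̂, B̃ invertible. Suppose max(‖D̂₁ B̂⁻¹‖, ‖B̂⁻¹ D̂₂ᵀ‖) ≤ ρ and max(‖D̃₁ B̃⁻¹‖, ‖B̃⁻¹ D̃₂ᵀ‖) ≤ θ. Then ‖Xᵗ⁺¹ − X̄‖_F² ≤ (1 + 3 max(ρ, θ, ρθ)²) (‖B̂ − B̃‖_F² + ‖D̂₁ − D̃₁‖_F² + ‖D̂₂ − D̃₂‖_F²). -/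

import Mathlib

/-!
Conjugation by the orthogonal matrices `[U, U⊥]` and `[V, V⊥]` preserves the Frobenius norm, so
the error splits into its four blocks. Three of them are the differences `B̂ - B̃`, `D̂₁ - D̃₁`,
`D̂₂ - D̃₂`; the fourth is controlled through the identity
`D̂₁B̂⁻¹D̂₂ᵀ - D̃₁B̃⁻¹D̃₂ᵀ = (D̂₁B̂⁻¹)(D̂₂ - D̃₂)ᵀ - (D̂₁B̂⁻¹)(B̂ - B̃)(B̃⁻¹D̃₂ᵀ) + (D̂₁ - D̃₁)(B̃⁻¹D̃₂ᵀ)`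
together with `‖XY‖_F ≤ ‖X‖ ‖Y‖_F`, which bounds it by `max(ρ, θ, ρθ)` times the sum of the three
block errors; `(a + b + c)² ≤ 3(a² + b² + c²)` finishes.
-/

open Matrix
noncomputable section

/-- Frobenius norm of a real matrix. -/
def frob {m n : Type*} [Fintype m] [Fintype n] (A : Matrix m n ℝ) : ℝ :=
  Real.sqrt (∑ i, ∑ j, (A i j) ^ 2)

/-- Spectral (operator ℓ²→ℓ²) norm of a real matrix. -/
def spec {m n : Type*} [Fintype m] [Fintype n] [DecidableEq n] (A : Matrix m n ℝ) : ℝ :=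
  ‖LinearMap.toContinuousLinearMap (Matrix.toEuclideanLin A)‖

/-- Nuclear norm: sum of singular values (square roots of eigenvalues of AᵀA). -/
def nuc {m n : Type*} [Fintype m] [Fintype n] [DecidableEq n] (A : Matrix m n ℝ) : ℝ :=
  ∑ i, Real.sqrt ((show (Aᵀ * A).IsHermitian by simpa using Matrix.isHermitian_conjTranspose_mul_self A).eigenvalues i)

attribute [local instance] Matrix.frobeniusSeminormedAddCommGroup

section
variable {m n k l : Type*} [Fintype m] [Fintype n] [Fintype k] [Fintype l]

lemma frob_nonneg (A : Matrix m n ℝ) : 0 ≤ frob A := Real.sqrt_nonneg _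

lemma frob_sq (A : Matrix m n ℝ) : frob A ^ 2 = ∑ i, ∑ j, A i j ^ 2 :=
  Real.sq_sqrt (by positivity)

lemma frob_eq_norm (A : Matrix m n ℝ) : frob A = ‖A‖ := by
  rw [frobenius_norm_def, frob, Real.sqrt_eq_rpow]
  simp only [Real.norm_eq_abs, Real.rpow_two, sq_abs]

lemma frob_transpose (A : Matrix m n ℝ) : frob Aᵀ = frob A := by
  rw [frob_eq_norm, frob_eq_norm, frobenius_norm_transpose]

lemma frob_sq_eq_trace (A : Matrix m n ℝ) : frob A ^ 2 = (Aᵀ * A).trace := by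
  rw [frob_sq, trace, Finset.sum_comm]
  simp [Matrix.mul_apply, sq]

lemma frob_fromBlocks_sq (A : Matrix m k ℝ) (B : Matrix m l ℝ) (C : Matrix n k ℝ)
    (D : Matrix n l ℝ) :
    frob (fromBlocks A B C D) ^ 2 = frob A ^ 2 + frob B ^ 2 + frob C ^ 2 + frob D ^ 2 := by
  simp only [frob_sq, Fintype.sum_sum_type, fromBlocks_apply₁₁, fromBlocks_apply₁₂,
    fromBlocks_apply₂₁, fromBlocks_apply₂₂, Finset.sum_add_distrib]
  ring

lemma frob_mul_mul_transpose_of_orthonormal [DecidableEq m] [DecidableEq n]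
    (Q : Matrix k m ℝ) (W : Matrix l n ℝ) (A : Matrix m n ℝ) (hQ : Qᵀ * Q = 1) (hW : Wᵀ * W = 1) :
    frob (Q * A * Wᵀ) = frob A := by
  refine (pow_left_inj₀ (frob_nonneg _) (frob_nonneg _) two_ne_zero).mp ?_
  rw [frob_sq_eq_trace, frob_sq_eq_trace, transpose_mul, transpose_mul, transpose_transpose,
    show W * (Aᵀ * Qᵀ) * (Q * A * Wᵀ) = W * (Aᵀ * (Qᵀ * Q) * A * Wᵀ) by
      simp only [Matrix.mul_assoc],
    hQ, Matrix.mul_one, trace_mul_comm, Matrix.mul_assoc, hW, Matrix.mul_one]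

lemma spec_nonneg [DecidableEq n] (A : Matrix m n ℝ) : 0 ≤ spec A := norm_nonneg _

lemma spec_transpose [DecidableEq m] [DecidableEq n] (A : Matrix m n ℝ) : spec Aᵀ = spec A := by
  rw [spec, ← conjTranspose_eq_transpose_of_trivial, toEuclideanLin_conjTranspose_eq_adjoint,
    LinearMap.adjoint_toContinuousLinearMap]
  exact LinearIsometryEquiv.norm_map ContinuousLinearMap.adjoint _

lemma sum_sq_mulVec_le [DecidableEq n] (A : Matrix m n ℝ) (v : n → ℝ) :
    ∑ i, (A *ᵥ v) i ^ 2 ≤ spec A ^ 2 * ∑ j, v j ^ 2 := by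
  have h := (LinearMap.toContinuousLinearMap (toEuclideanLin A)).le_opNorm (WithLp.toLp 2 v)
  have := pow_le_pow_left₀ (norm_nonneg _) h 2
  rwa [mul_pow, EuclideanSpace.real_norm_sq_eq, EuclideanSpace.real_norm_sq_eq] at this

lemma frob_mul_le_spec_mul [DecidableEq n] (A : Matrix m n ℝ) (X : Matrix n k ℝ) :
    frob (A * X) ≤ spec A * frob X := by
  refine (pow_le_pow_iff_left₀ (frob_nonneg _)
    (mul_nonneg (spec_nonneg A) (frob_nonneg _)) two_ne_zero).mp ?_
  rw [mul_pow, frob_sq, frob_sq, Finset.sum_comm, Finset.sum_comm (γ := n), Finset.mul_sum]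
  exact Finset.sum_le_sum fun j _ => sum_sq_mulVec_le A (fun i => X i j)

lemma frob_mul_le_mul_spec [DecidableEq m] [DecidableEq n] (X : Matrix k n ℝ) (A : Matrix n m ℝ) :
    frob (X * A) ≤ frob X * spec A := by
  simpa only [← transpose_mul, frob_transpose, spec_transpose, mul_comm] using
    frob_mul_le_spec_mul Aᵀ Xᵀ

end

lemma fromBlocks_sub {α m n o l : Type*} [Sub α] (A A' : Matrix n l α) (B B' : Matrix n m α)
    (C C' : Matrix o l α) (D D' : Matrix o m α) :
    fromBlocks A B C D - fromBlocks A' B' C' D'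
      = fromBlocks (A - A') (B - B') (C - C') (D - D') := by
  ext (i | i) (j | j) <;> rfl

lemma mul_inv_mul_sub_mul_inv_mul {α m n k : Type*} [CommRing α] [Fintype k] [DecidableEq k]
    (A₁ A₂ : Matrix m k α) (B₁ B₂ : Matrix k k α) (C₁ C₂ : Matrix k n α)
    (hB₁ : IsUnit B₁) (hB₂ : IsUnit B₂) :
    A₁ * B₁⁻¹ * C₁ - A₂ * B₂⁻¹ * C₂
      = A₁ * B₁⁻¹ * (C₁ - C₂) - A₁ * B₁⁻¹ * (B₁ - B₂) * (B₂⁻¹ * C₂)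
        + (A₁ - A₂) * (B₂⁻¹ * C₂) := by
  rw [isUnit_iff_isUnit_det] at hB₁ hB₂
  simp only [Matrix.mul_sub, Matrix.sub_mul, Matrix.mul_assoc,
    nonsing_inv_mul_cancel_left _ _ hB₁, mul_nonsing_inv_cancel_left _ _ hB₂]
  abel

section
variable {m n k : Type*} [Fintype m] [Fintype n] [Fintype k] [DecidableEq n] [DecidableEq k]

lemma frob_mul_inv_mul_sub_le (A₁ A₂ : Matrix m k ℝ) (B₁ B₂ : Matrix k k ℝ)
    (C₁ C₂ : Matrix k n ℝ) (hB₁ : IsUnit B₁) (hB₂ : IsUnit B₂) {ρ θ : ℝ}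
    (hρ : spec (A₁ * B₁⁻¹) ≤ ρ) (hθ : spec (B₂⁻¹ * C₂) ≤ θ) :
    frob (A₁ * B₁⁻¹ * C₁ - A₂ * B₂⁻¹ * C₂)
      ≤ ρ * frob (C₁ - C₂) + ρ * θ * frob (B₁ - B₂) + θ * frob (A₁ - A₂) := by
  have hρ₀ : 0 ≤ ρ := (spec_nonneg _).trans hρ
  have hC : frob (A₁ * B₁⁻¹ * (C₁ - C₂)) ≤ ρ * frob (C₁ - C₂) :=
    (frob_mul_le_spec_mul _ _).trans (by gcongr; exact frob_nonneg _)
  have hB : frob (A₁ * B₁⁻¹ * (B₁ - B₂) * (B₂⁻¹ * C₂)) ≤ ρ * θ * frob (B₁ - B₂) :=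
    calc _ ≤ frob (A₁ * B₁⁻¹ * (B₁ - B₂)) * spec (B₂⁻¹ * C₂) := frob_mul_le_mul_spec _ _
      _ ≤ spec (A₁ * B₁⁻¹) * frob (B₁ - B₂) * spec (B₂⁻¹ * C₂) := by
        gcongr
        · exact spec_nonneg _
        · exact frob_mul_le_spec_mul _ _
      _ ≤ ρ * frob (B₁ - B₂) * θ :=
        mul_le_mul (mul_le_mul_of_nonneg_right hρ (frob_nonneg _)) hθ (spec_nonneg _)
          (mul_nonneg hρ₀ (frob_nonneg _))
      _ = ρ * θ * frob (B₁ - B₂) := by ring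
  have hA : frob ((A₁ - A₂) * (B₂⁻¹ * C₂)) ≤ θ * frob (A₁ - A₂) :=
    (frob_mul_le_mul_spec _ _).trans (by rw [mul_comm]; gcongr; exact frob_nonneg _)
  rw [mul_inv_mul_sub_mul_inv_mul _ _ _ _ _ _ hB₁ hB₂]
  simp only [frob_eq_norm] at hC hB hA ⊢
  exact norm_add_le_of_le (norm_sub_le_of_le hC hB) hA

end

theorem stmt_12_general {p₁ p₂ r : ℕ}
    (U : Matrix (Fin p₁) (Fin r) ℝ) (Up : Matrix (Fin p₁) (Fin (p₁ - r)) ℝ)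
    (V : Matrix (Fin p₂) (Fin r) ℝ) (Vp : Matrix (Fin p₂) (Fin (p₂ - r)) ℝ)
    (hU : (fromCols U Up)ᵀ * fromCols U Up = 1)
    (hV : (fromCols V Vp)ᵀ * fromCols V Vp = 1)
    (Bh Bt : Matrix (Fin r) (Fin r) ℝ) (hBh : IsUnit Bh) (hBt : IsUnit Bt)
    (D1h D1t : Matrix (Fin (p₁ - r)) (Fin r) ℝ)
    (D2h D2t : Matrix (Fin (p₂ - r)) (Fin r) ℝ)
    (ρ θ : ℝ)
    (hρ : max (spec (D1h * Bh⁻¹)) (spec (Bh⁻¹ * D2hᵀ)) ≤ ρ)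
    (hθ : max (spec (D1t * Bt⁻¹)) (spec (Bt⁻¹ * D2tᵀ)) ≤ θ) :
    frob (fromCols U Up * fromBlocks Bh D2hᵀ D1h (D1h * Bh⁻¹ * D2hᵀ) * (fromCols V Vp)ᵀ
          - fromCols U Up * fromBlocks Bt D2tᵀ D1t (D1t * Bt⁻¹ * D2tᵀ) * (fromCols V Vp)ᵀ) ^ 2
      ≤ (1 + 3 * max ρ (max θ (ρ * θ)) ^ 2) *
          (frob (Bh - Bt) ^ 2 + frob (D1h - D1t) ^ 2 + frob (D2h - D2t) ^ 2) := by
  rw [← Matrix.sub_mul, ← Matrix.mul_sub, fromBlocks_sub,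
    frob_mul_mul_transpose_of_orthonormal _ _ _ hU hV, frob_fromBlocks_sq, ← transpose_sub,
    frob_transpose]
  have hρ₁ := (le_max_left _ _).trans hρ
  have hθ₂ := (le_max_right _ _).trans hθ
  have hSchur := frob_mul_inv_mul_sub_le D1h D1t Bh Bt D2hᵀ D2tᵀ hBh hBt hρ₁ hθ₂
  rw [← transpose_sub, frob_transpose] at hSchur
  set E := frob (D1h * Bh⁻¹ * D2hᵀ - D1t * Bt⁻¹ * D2tᵀ)
  set b := frob (Bh - Bt)
  set d₁ := frob (D1h - D1t)
  set d₂ := frob (D2h - D2t)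
  set M := max ρ (max θ (ρ * θ))
  have hρM : ρ ≤ M := le_max_left _ _
  have hθM : θ ≤ M := (le_max_left _ _).trans (le_max_right _ _)
  have hρθM : ρ * θ ≤ M := (le_max_right _ _).trans (le_max_right _ _)
  have hb := frob_nonneg (Bh - Bt)
  have hd₁ := frob_nonneg (D1h - D1t)
  have hd₂ := frob_nonneg (D2h - D2t)
  have hE : E ≤ M * (b + d₁ + d₂) := hSchur.trans (by nlinarith)
  nlinarith [mul_self_le_mul_self (frob_nonneg _) hE, sq_nonneg (b - d₁), sq_nonneg (b - d₂),
    sq_nonneg (d₁ - d₂)]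

/-- Frobenius error bound between two retracted iterates in terms of the block
differences: ‖Xᵗ⁺¹ − X̄‖_F² ≤ (1 + 3 max(ρ,θ,ρθ)²)(‖B̂−B̃‖_F² + ‖D̂₁−D̃₁‖_F² + ‖D̂₂−D̃₂‖_F²). -/
theorem stmt_12 {p₁ p₂ r : ℕ}
    (U : Matrix (Fin p₁) (Fin r) ℝ) (Up : Matrix (Fin p₁) (Fin (p₁ - r)) ℝ)
    (V : Matrix (Fin p₂) (Fin r) ℝ) (Vp : Matrix (Fin p₂) (Fin (p₂ - r)) ℝ)
    (hU : (fromCols U Up)ᵀ * fromCols U Up = 1)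
    (hU' : fromCols U Up * (fromCols U Up)ᵀ = 1)
    (hV : (fromCols V Vp)ᵀ * fromCols V Vp = 1)
    (hV' : fromCols V Vp * (fromCols V Vp)ᵀ = 1)
    (Bh Bt : Matrix (Fin r) (Fin r) ℝ) (hBh : IsUnit Bh) (hBt : IsUnit Bt)
    (D1h D1t : Matrix (Fin (p₁ - r)) (Fin r) ℝ)
    (D2h D2t : Matrix (Fin (p₂ - r)) (Fin r) ℝ)
    (ρ θ : ℝ)
    (hρ : max (spec (D1h * Bh⁻¹)) (spec (Bh⁻¹ * D2hᵀ)) ≤ ρ)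
    (hθ : max (spec (D1t * Bt⁻¹)) (spec (Bt⁻¹ * D2tᵀ)) ≤ θ) :
    frob (fromCols U Up * fromBlocks Bh D2hᵀ D1h (D1h * Bh⁻¹ * D2hᵀ) * (fromCols V Vp)ᵀ
          - fromCols U Up * fromBlocks Bt D2tᵀ D1t (D1t * Bt⁻¹ * D2tᵀ) * (fromCols V Vp)ᵀ) ^ 2
      ≤ (1 + 3 * max ρ (max θ (ρ * θ)) ^ 2) *
          (frob (Bh - Bt) ^ 2 + frob (D1h - D1t) ^ 2 + frob (D2h - D2t) ^ 2) :=
  stmt_12_general U Up V Vp hU hV Bh Bt hBh hBt D1h D1t D2h D2t ρ θ hρ hθ
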